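/- Consider in ℝ² the problem: minimize f(x) := −x₁² − x₂ subject to g₁(x) := 2x₁² + x₂ ≤ 0, g₂(x) := −x₁² + x₂ ≤ 0, g₃(x) := x₂ ≤ 0, and let x* = (0,0). Then: (i) x* is a local minimizer at which MFCQ holds; (ii) the critical subspace is S(x*) = {d ∈ ℝ² : d₂ = 0}; (iii) μ̄ := (0,1,0) is a Lagrange multiplier for which the WSOC inequality fails, i.e. there exists d ∈ S(x*) with dᵀ∇²ₓₓL(x*,μ̄)d < 0; (iv) μ := (1,0,0) is a Lagrange multiplier satisfying dᵀ∇²ₓₓL(x*,μ)d ≥ 0 for all d ∈ S(x*), so WSOC holds at x*. In particular this problem is not a counterexample to the Andreani–Martínez–Schuverdt conjecture. -/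

import Mathlib

open scoped BigOperators
open Matrix

attribute [local instance] Classical.propDecidable

noncomputable section

/-- The quadratic form `d ↦ dᵀ ∇²φ(x) d` of the Hessian of `φ` at `x`. -/
def hessQ {n : ℕ} (φ : (Fin n → ℝ) → ℝ) (x d : Fin n → ℝ) : ℝ :=
  iteratedFDeriv ℝ 2 φ x ![d, d]

/-- Feasibility for an inequality-constrained problem. -/
def FeasI {n p : ℕ} (g : Fin p → (Fin n → ℝ) → ℝ) (x : Fin n → ℝ) : Prop :=
  ∀ j, g j x ≤ 0

/-- The Lagrangian of an inequality-constrained problem. -/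
def LagrI {n p : ℕ} (f : (Fin n → ℝ) → ℝ) (g : Fin p → (Fin n → ℝ) → ℝ)
    (mu : Fin p → ℝ) (x : Fin n → ℝ) : ℝ :=
  f x + ∑ j, mu j * g j x

/-- `mu` is a Lagrange multiplier at `xs`, i.e. `mu ∈ Λ(xs)`. -/
def IsLagMultI {n p : ℕ} (f : (Fin n → ℝ) → ℝ) (g : Fin p → (Fin n → ℝ) → ℝ)
    (xs : Fin n → ℝ) (mu : Fin p → ℝ) : Prop :=
  (∀ j, 0 ≤ mu j) ∧ fderiv ℝ (LagrI f g mu) xs = 0 ∧ ∀ j, mu j * g j xs = 0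

/-- MFCQ for an inequality-constrained problem. -/
def MFCQI {n p : ℕ} (g : Fin p → (Fin n → ℝ) → ℝ) (xs : Fin n → ℝ) : Prop :=
  ∃ d : Fin n → ℝ, ∀ j, g j xs = 0 → fderiv ℝ (g j) xs d < 0

/-- Membership in the critical subspace `S(xs)`. -/
def critSubI {n p : ℕ} (g : Fin p → (Fin n → ℝ) → ℝ) (xs d : Fin n → ℝ) : Prop :=
  ∀ j, g j xs = 0 → fderiv ℝ (g j) xs d = 0

/-- Objective of the example from Minchenko–Leschov. -/
def f15 : (Fin 2 → ℝ) → ℝ := fun x => -(x 0) ^ 2 - x 1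

/-- Constraints of the example from Minchenko–Leschov. -/
def g15 : Fin 3 → (Fin 2 → ℝ) → ℝ :=
  ![fun x => 2 * (x 0) ^ 2 + x 1,
    fun x => -(x 0) ^ 2 + x 1,
    fun x => x 1]


/-!
All three constraints are active at the origin and have the same gradient `e₂` there, so MFCQ
holds with `d = -e₂` and `S(x*) = {d₂ = 0}`. Each function of the problem has the form
`c x₁² + b x₂`, and so does the Lagrangian: `L(·, μ) = (2μ₁ - μ₂ - 1) x₁² + (μ₁ + μ₂ + μ₃ - 1) x₂`.
Hence every `μ ≥ 0` with `μ₁ + μ₂ + μ₃ = 1` is a Lagrange multiplier, and the Hessian form of its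
Lagrangian is `2 (2μ₁ - μ₂ - 1) d₁²`: negative on `e₁ ∈ S(x*)` for `(0,1,0)`, nonnegative for
`(1,0,0)`. Finally `g₁ ≤ 0` forces `x₂ ≤ -2x₁²`, so `f ≥ x₁² ≥ 0 = f(x*)` on the feasible set.
-/

open ContinuousLinearMap

section CoordinateQuadratic

variable {n : ℕ} (i k : Fin n) (c b : ℝ)

theorem hasFDerivAt_mul_sq_add_mul (x : Fin n → ℝ) :
    HasFDerivAt (fun x : Fin n → ℝ => c * x i ^ 2 + b * x k)
      ((2 * c * x i) • proj i + b • proj k : (Fin n → ℝ) →L[ℝ] ℝ) x := by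
  have hquad := ((hasFDerivAt_apply (𝕜 := ℝ) i x).pow 2).const_mul c
  refine (hquad.add ((hasFDerivAt_apply (𝕜 := ℝ) k x).const_mul b)).congr_fderiv ?_
  ext d
  simp only [_root_.add_apply, _root_.smul_apply, proj_apply, nsmul_eq_mul]
  ring

/-- The derivative as a continuous linear map plus a constant, so that the second derivative
can be read off by `ContinuousLinearMap.fderiv`. -/
theorem fderiv_mul_sq_add_mul :
    fderiv ℝ (fun x : Fin n → ℝ => c * x i ^ 2 + b * x k) =
      fun x => ((2 * c) • proj i : (Fin n → ℝ) →L[ℝ] ℝ).smulRight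
        (proj i : (Fin n → ℝ) →L[ℝ] ℝ) x + b • proj k := by
  ext x d
  rw [(hasFDerivAt_mul_sq_add_mul i k c b x).fderiv]
  simp only [_root_.add_apply, _root_.smul_apply, smulRight_apply, proj_apply,
    smul_eq_mul]

theorem fderiv_mul_sq_add_mul_zero :
    fderiv ℝ (fun x : Fin n → ℝ => c * x i ^ 2 + b * x k) 0 =
      (b • proj k : (Fin n → ℝ) →L[ℝ] ℝ) := by
  simp [fderiv_mul_sq_add_mul]

theorem hessQ_mul_sq_add_mul (x d : Fin n → ℝ) :
    hessQ (fun x : Fin n → ℝ => c * x i ^ 2 + b * x k) x d = 2 * c * d i ^ 2 := by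
  rw [hessQ, iteratedFDeriv_two_apply, fderiv_mul_sq_add_mul,
    fderiv_add_const, ContinuousLinearMap.fderiv]
  simp only [smulRight_apply, _root_.smul_apply, proj_apply, Matrix.cons_val_zero,
    Matrix.cons_val_one, smul_eq_mul]
  ring

end CoordinateQuadratic

theorem g15_eq (j : Fin 3) : g15 j = fun x => ![2, -1, 0] j * x 0 ^ 2 + 1 * x 1 := by
  fin_cases j <;> ext x <;> simp [g15]

theorem lagrI_f15_g15 (μ : Fin 3 → ℝ) :
    LagrI f15 g15 μ =
      fun x => (2 * μ 0 - μ 1 - 1) * x 0 ^ 2 + (μ 0 + μ 1 + μ 2 - 1) * x 1 := by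
  ext x
  simp only [LagrI, f15, g15, Fin.sum_univ_three, Matrix.cons_val_zero, Matrix.cons_val_one,
    Matrix.cons_val_two, Matrix.head_cons, Matrix.tail_cons]
  ring

theorem g15_zero (j : Fin 3) : g15 j 0 = 0 := by
  simp [g15_eq]

theorem fderiv_g15_zero (j : Fin 3) (d : Fin 2 → ℝ) : fderiv ℝ (g15 j) 0 d = d 1 := by
  rw [g15_eq, fderiv_mul_sq_add_mul_zero]
  simp

theorem critSubI_g15_iff (d : Fin 2 → ℝ) : critSubI g15 0 d ↔ d 1 = 0 := by
  simp [critSubI, g15_zero, fderiv_g15_zero]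

theorem isMinOn_f15 : IsMinOn f15 {x | FeasI g15 x} 0 := fun x hx => by
  have hg : 2 * x 0 ^ 2 + x 1 ≤ 0 := hx 0
  simp only [Set.mem_ofPred_eq, f15, Pi.zero_apply]
  nlinarith [sq_nonneg (x 0)]

theorem isLagMultI_f15_g15 (μ : Fin 3 → ℝ) (hμ : ∀ j, 0 ≤ μ j) (hsum : μ 0 + μ 1 + μ 2 = 1) :
    IsLagMultI f15 g15 0 μ := by
  refine ⟨hμ, ?_, fun j => by rw [g15_zero, mul_zero]⟩
  rw [lagrI_f15_g15, fderiv_mul_sq_add_mul_zero, hsum, sub_self, zero_smul]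

theorem hessQ_lagrI_f15_g15 (μ : Fin 3 → ℝ) (d : Fin 2 → ℝ) :
    hessQ (LagrI f15 g15 μ) 0 d = 2 * (2 * μ 0 - μ 1 - 1) * d 0 ^ 2 := by
  rw [lagrI_f15_g15, hessQ_mul_sq_add_mul]

/-- in the Minchenko–Leschov example, the origin is a local minimizer where
MFCQ holds, `S(x*) = {d : d₂ = 0}`, the multiplier `(0,1,0)` violates the WSOC inequality,
but the multiplier `(1,0,0)` satisfies it, so WSOC holds. -/
theorem stmt15 :
    (FeasI g15 (0 : Fin 2 → ℝ) ∧ IsLocalMinOn f15 {x | FeasI g15 x} (0 : Fin 2 → ℝ)) ∧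
    MFCQI g15 (0 : Fin 2 → ℝ) ∧
    ({d : Fin 2 → ℝ | critSubI g15 (0 : Fin 2 → ℝ) d} = {d : Fin 2 → ℝ | d 1 = 0}) ∧
    (IsLagMultI f15 g15 (0 : Fin 2 → ℝ) ![0, 1, 0] ∧
      ∃ d : Fin 2 → ℝ, critSubI g15 (0 : Fin 2 → ℝ) d ∧
        hessQ (LagrI f15 g15 ![0, 1, 0]) (0 : Fin 2 → ℝ) d < 0) ∧
    (IsLagMultI f15 g15 (0 : Fin 2 → ℝ) ![1, 0, 0] ∧
      ∀ d : Fin 2 → ℝ, critSubI g15 (0 : Fin 2 → ℝ) d →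
        0 ≤ hessQ (LagrI f15 g15 ![1, 0, 0]) (0 : Fin 2 → ℝ) d) := by
  have hμ₂ : IsLagMultI f15 g15 0 ![0, 1, 0] :=
    isLagMultI_f15_g15 _ (by simp [Fin.forall_fin_succ]) (by simp)
  have hμ₁ : IsLagMultI f15 g15 0 ![1, 0, 0] :=
    isLagMultI_f15_g15 _ (by simp [Fin.forall_fin_succ]) (by simp)
  refine ⟨⟨fun j => (g15_zero j).le, isMinOn_f15.localize⟩,
    ⟨![0, -1], fun j _ => by simp [fderiv_g15_zero]⟩, Set.ext critSubI_g15_iff,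
    ⟨hμ₂, ![1, 0], by simp [critSubI_g15_iff], by norm_num [hessQ_lagrI_f15_g15]⟩,
    hμ₁, fun d _ => ?_⟩
  rw [hessQ_lagrI_f15_g15]
  simp [sq_nonneg]
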